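/- Let R be a commutative ring, n ≥ 1, and v_n = e₁ − e₂ + e₃ − ⋯ + (−1)^{n−1}e_n ∈ Rⁿ. Then: (a) every A ∈ Aut(X^{#n}) fixes v_n, i.e. A(v_n) = v_n; (b) if n is odd then λₙ(v_n, x) = 0 for all x ∈ Rⁿ, while if n is even then λₙ(v_n, x) = ∂ₙ(x) for all x ∈ Rⁿ; (c) in both cases λ′ₙ(v_n, x) = ∂ₙ(x) for all x ∈ Rⁿ, where λ′ₙ(x,y) = λₙ(x,y) + ∂ₙ(x)∂ₙ(y) is the curved form. -/
import Mathlib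

/-- The bilinear form of the formed space with boundary `X^{#n}`. -/
def lamX (R : Type) [CommRing R] (n : ℕ) (x y : Fin n → R) : R :=
  ∑ i : Fin n, ∑ j : Fin n, (if (i : ℕ) < (j : ℕ) then x i * y j
    else if (j : ℕ) < (i : ℕ) then -(x i * y j) else 0)

/-- The boundary map of `X^{#n}`. -/
def bdX (R : Type) [CommRing R] (n : ℕ) (x : Fin n → R) : R := ∑ i, x i

section aux

variable (R : Type) [CommRing R] (n : ℕ)

lemma lamX_sub_left (a b x : Fin n → R) :
    lamX R n (a - b) x = lamX R n a x - lamX R n b x := by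
  unfold lamX
  rw [← Finset.sum_sub_distrib]
  refine Finset.sum_congr rfl fun i _ => ?_
  rw [← Finset.sum_sub_distrib]
  refine Finset.sum_congr rfl fun j _ => ?_
  simp only [Pi.sub_apply]
  split_ifs <;> ring

lemma bdX_sub (a b : Fin n → R) : bdX R n (a - b) = bdX R n a - bdX R n b := by
  unfold bdX
  rw [← Finset.sum_sub_distrib]
  simp

lemma row_sum (w : Fin n → R) (j : Fin n) :
    ∑ i : Fin n, ((if (i : ℕ) < (j : ℕ) then w i else if (j : ℕ) < (i : ℕ) then -(w i) else 0)
        + w i)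
      = 2 * ∑ i ∈ Finset.univ.filter (fun i : Fin n => (i : ℕ) < (j : ℕ)), w i + w j := by
  have key : ∀ i : Fin n,
      (if (i : ℕ) < (j : ℕ) then w i else if (j : ℕ) < (i : ℕ) then -(w i) else 0) + w i
        = 2 * (if (i : ℕ) < (j : ℕ) then w i else 0) + (if i = j then w i else 0) := by
    intro i
    by_cases h1 : (i : ℕ) < (j : ℕ)
    · have h2 : i ≠ j := fun e => by rw [e] at h1; exact lt_irrefl _ h1
      simp [h1, h2]; ring
    · by_cases h3 : (j : ℕ) < (i : ℕ)
      · have h2 : i ≠ j := fun e => by rw [e] at h3; exact lt_irrefl _ h3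
        simp [h1, h3, h2]
      · have h2 : i = j := Fin.ext (by omega)
        simp [h1, h3, h2]
  rw [Finset.sum_congr rfl fun i _ => key i, Finset.sum_add_distrib, ← Finset.mul_sum,
    ← Finset.sum_filter, Finset.sum_ite_eq' Finset.univ j w]
  simp

lemma lamX_single (w : Fin n → R) (j : Fin n) :
    lamX R n w (Pi.single j 1)
      = ∑ i : Fin n, (if (i : ℕ) < (j : ℕ) then w i
          else if (j : ℕ) < (i : ℕ) then -(w i) else 0) := by
  unfold lamX
  refine Finset.sum_congr rfl fun i _ => ?_
  rw [Finset.sum_eq_single j]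
  · simp [Pi.single_eq_same]
  · intro k _ hk
    have : (Pi.single j (1 : R) : Fin n → R) k = 0 := by simp [Pi.single_eq_of_ne hk]
    split_ifs <;> simp [this]
  · simp

lemma bdX_single (j : Fin n) : bdX R n (Pi.single j (1 : R)) = 1 := by
  unfold bdX
  rw [Finset.sum_eq_single j]
  · simp
  · intro k _ hk; simp [Pi.single_eq_of_ne hk]
  · simp

/-- nondegeneracy of the curved form -/
lemma curved_zero (w : Fin n → R)
    (h : ∀ x : Fin n → R, lamX R n w x + bdX R n w * bdX R n x = 0) : w = 0 := by
  have H : ∀ j : Fin n,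
      2 * ∑ i ∈ Finset.univ.filter (fun i : Fin n => (i : ℕ) < (j : ℕ)), w i + w j = 0 := by
    intro j
    have h0 := h (Pi.single j 1)
    rw [lamX_single, bdX_single, mul_one] at h0
    rw [← row_sum]
    rw [show bdX R n w = ∑ i, w i from rfl] at h0
    rw [Finset.sum_add_distrib]
    exact h0
  have Z : ∀ m : ℕ, ∀ j : Fin n, (j : ℕ) = m → w j = 0 := by
    intro m
    induction m using Nat.strong_induction_on with
    | _ m ih =>
      intro j hj
      have h0 : ∑ i ∈ Finset.univ.filter (fun i : Fin n => (i : ℕ) < (j : ℕ)), w i = 0 := by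
        refine Finset.sum_eq_zero fun i hi => ?_
        rw [Finset.mem_filter] at hi
        exact ih (i : ℕ) (by omega) i rfl
      have h1 := H j
      rw [h0] at h1
      simpa using h1
  funext j
  exact Z (j : ℕ) j rfl

lemma alt_one (v : Fin n → R) (hv : ∀ i : Fin n, v i = (-1 : R) ^ (i : ℕ)) (j : Fin n) :
    2 * ∑ i ∈ Finset.univ.filter (fun i : Fin n => (i : ℕ) < (j : ℕ)), v i + v j = 1 := by
  have h1 : ∑ i ∈ Finset.univ.filter (fun i : Fin n => (i : ℕ) < (j : ℕ)), v i
      = ∑ k ∈ Finset.range (j : ℕ), (-1 : R) ^ k := by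
    rw [Finset.sum_filter]
    simp only [hv]
    rw [Fin.sum_univ_eq_sum_range (fun k => if k < (j : ℕ) then (-1 : R) ^ k else 0)]
    rw [← Finset.sum_filter]
    congr 1
    ext k
    simp only [Finset.mem_filter, Finset.mem_range]
    have := j.isLt
    omega
  rw [h1, neg_one_geom_sum, hv j]
  rcases Nat.even_or_odd (j : ℕ) with h | h
  · rw [if_pos h, h.neg_one_pow]; ring
  · rw [if_neg (Nat.not_even_iff_odd.mpr h), h.neg_one_pow]; ring

lemma bd_v (v : Fin n → R) (hv : ∀ i : Fin n, v i = (-1 : R) ^ (i : ℕ)) :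
    bdX R n v = if Even n then 0 else 1 := by
  unfold bdX
  simp only [hv]
  rw [Fin.sum_univ_eq_sum_range]
  exact neg_one_geom_sum

lemma lam_v (v : Fin n → R) (hv : ∀ i : Fin n, v i = (-1 : R) ^ (i : ℕ)) (x : Fin n → R) :
    lamX R n v x = (1 - bdX R n v) * bdX R n x := by
  unfold lamX bdX
  rw [Finset.sum_comm, Finset.mul_sum]
  refine Finset.sum_congr rfl fun j _ => ?_
  have hfac : ∑ i : Fin n, (if (i : ℕ) < (j : ℕ) then v i * x j
        else if (j : ℕ) < (i : ℕ) then -(v i * x j) else 0)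
      = (∑ i : Fin n, (if (i : ℕ) < (j : ℕ) then v i
          else if (j : ℕ) < (i : ℕ) then -(v i) else 0)) * x j := by
    rw [Finset.sum_mul]
    refine Finset.sum_congr rfl fun i _ => ?_
    split_ifs <;> ring
  have hsum : (∑ i : Fin n, (if (i : ℕ) < (j : ℕ) then v i
        else if (j : ℕ) < (i : ℕ) then -(v i) else 0)) + ∑ i : Fin n, v i = 1 := by
    rw [← Finset.sum_add_distrib, row_sum]
    exact alt_one R n v hv j
  rw [hfac]
  have : (∑ i : Fin n, (if (i : ℕ) < (j : ℕ) then v i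
      else if (j : ℕ) < (i : ℕ) then -(v i) else 0)) = 1 - ∑ i : Fin n, v i := by
    linear_combination hsum
  rw [this]

end aux

/-- the vector `v_n = e₁ - e₂ + ⋯ + (-1)^(n-1) eₙ` is fixed by every
automorphism of `X^{#n}`; moreover `λₙ(vₙ, -) = 0` if `n` is odd and `λₙ(vₙ, -) = ∂ₙ` if `n` is
even, and in both cases `λ'ₙ(vₙ, -) = ∂ₙ` for the curved form `λ'ₙ = λₙ + ∂ₙ·∂ₙ`. -/
theorem special_vector (R : Type) [CommRing R] (n : ℕ) (hn : 1 ≤ n)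
    (v : Fin n → R) (hv : ∀ i : Fin n, v i = (-1 : R) ^ (i : ℕ)) :
    (∀ A : (Fin n → R) ≃ₗ[R] (Fin n → R),
      (∀ x y, lamX R n (A x) (A y) = lamX R n x y) →
      (∀ x, bdX R n (A x) = bdX R n x) →
      A v = v) ∧
    ((n % 2 = 1 → ∀ x : Fin n → R, lamX R n v x = 0) ∧
      (n % 2 = 0 → ∀ x : Fin n → R, lamX R n v x = bdX R n x)) ∧
    (∀ x : Fin n → R, lamX R n v x + bdX R n v * bdX R n x = bdX R n x) := by
  refine ⟨?_, ⟨?_, ?_⟩, ?_⟩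
  · intro A hlam hbd
    have key : ∀ x : Fin n → R,
        lamX R n (A v - v) x + bdX R n (A v - v) * bdX R n x = 0 := by
      intro x
      have h1 : lamX R n (A v) x = lamX R n v (A.symm x) := by
        conv_lhs => rw [← A.apply_symm_apply x]
        exact hlam v (A.symm x)
      have h2 : bdX R n (A v) = bdX R n v := hbd v
      have h3 : bdX R n (A.symm x) = bdX R n x := by
        rw [← hbd (A.symm x), A.apply_symm_apply]
      rw [lamX_sub_left, bdX_sub, h1, h2, lam_v R n v hv, lam_v R n v hv, h3]
      ring
    have hw : A v - v = 0 := curved_zero R n _ key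
    exact sub_eq_zero.mp hw
  · intro hodd x
    have hne : ¬ Even n := by rw [Nat.even_iff]; omega
    rw [lam_v R n v hv, bd_v R n v hv, if_neg hne]
    ring
  · intro heven x
    have he : Even n := by rw [Nat.even_iff]; omega
    rw [lam_v R n v hv, bd_v R n v hv, if_pos he]
    ring
  · intro x
    rw [lam_v R n v hv]
    ring
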